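/- arXiv:2404.12112 — 6 statements merged into one kernel-verified Lean document; each statement's English description precedes it below -/
import Mathlib

section
/- Let (S,⊣,⊢,⊥,γ,ξ) be a BiHom-associative trialgebra over a field F, let s, r, s′, r′ be nonnegative integers, let δ be a (γ^s ξ^r)-derivation of S and let δ′ be a (γ^{s′} ξ^{r′})-derivation of S. Then the commutator [δ,δ′] = δ∘δ′ − δ′∘δ is a (γ^{s+s′} ξ^{r+r′})-derivation of S. -/
/-- A BiHom-associative trialgebra structure on a vector space `S` over a field `F`,
given by three bilinear operations `l` (⊣), `r` (⊢), `m` (⊥) and two linear maps `γ`, `ξ`. -/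
structure IsBiHomTrialgebra (F : Type*) [Field F] {S : Type*} [AddCommGroup S] [Module F S]
    (l r m : S → S → S) (γ ξ : S → S) : Prop where
  l_add_left : ∀ x y z : S, l (x + y) z = l x z + l y z
  l_add_right : ∀ x y z : S, l x (y + z) = l x y + l x z
  l_smul_left : ∀ (a : F) (x y : S), l (a • x) y = a • l x y
  l_smul_right : ∀ (a : F) (x y : S), l x (a • y) = a • l x y
  r_add_left : ∀ x y z : S, r (x + y) z = r x z + r y z
  r_add_right : ∀ x y z : S, r x (y + z) = r x y + r x z
  r_smul_left : ∀ (a : F) (x y : S), r (a • x) y = a • r x y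
  r_smul_right : ∀ (a : F) (x y : S), r x (a • y) = a • r x y
  m_add_left : ∀ x y z : S, m (x + y) z = m x z + m y z
  m_add_right : ∀ x y z : S, m x (y + z) = m x y + m x z
  m_smul_left : ∀ (a : F) (x y : S), m (a • x) y = a • m x y
  m_smul_right : ∀ (a : F) (x y : S), m x (a • y) = a • m x y
  gamma_linear : IsLinearMap F γ
  xi_linear : IsLinearMap F ξ
  gamma_xi_comm : ∀ x : S, γ (ξ x) = ξ (γ x)
  gamma_l : ∀ x y : S, γ (l x y) = l (γ x) (γ y)
  gamma_r : ∀ x y : S, γ (r x y) = r (γ x) (γ y)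
  gamma_m : ∀ x y : S, γ (m x y) = m (γ x) (γ y)
  xi_l : ∀ x y : S, ξ (l x y) = l (ξ x) (ξ y)
  xi_r : ∀ x y : S, ξ (r x y) = r (ξ x) (ξ y)
  xi_m : ∀ x y : S, ξ (m x y) = m (ξ x) (ξ y)
  ax1 : ∀ x y z : S, l (l x y) (ξ z) = l (γ x) (l y z)
  ax2 : ∀ x y z : S, l (γ x) (l y z) = l (γ x) (r y z)
  ax3 : ∀ x y z : S, l (γ x) (r y z) = l (γ x) (m y z)
  ax4 : ∀ x y z : S, l (r x y) (ξ z) = r (γ x) (l y z)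
  ax5 : ∀ x y z : S, r (l x y) (ξ z) = r (γ x) (r y z)
  ax6 : ∀ x y z : S, r (r x y) (ξ z) = r (γ x) (r y z)
  ax7 : ∀ x y z : S, r (m x y) (ξ z) = r (γ x) (r y z)
  ax8 : ∀ x y z : S, l (m x y) (ξ z) = m (γ x) (l y z)
  ax9 : ∀ x y z : S, m (l x y) (ξ z) = m (γ x) (r y z)
  ax10 : ∀ x y z : S, m (r x y) (ξ z) = r (γ x) (m y z)
  ax11 : ∀ x y z : S, m (m x y) (ξ z) = m (γ x) (m y z)

/-- A `(γ^s ξ^r)`-derivation of a BiHom-associative trialgebra: a linear map commuting with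
`γ` and `ξ` satisfying the twisted Leibniz rule with twist `t = γ^[s] ∘ ξ^[r]` for each of
the three operations. -/
def IsGsxDerivation (F : Type*) [Field F] {S : Type*} [AddCommGroup S] [Module F S]
    (l r m : S → S → S) (γ ξ : S → S) (s t : ℕ) (δ : S → S) : Prop :=
  IsLinearMap F δ ∧ (∀ x, δ (γ x) = γ (δ x)) ∧ (∀ x, δ (ξ x) = ξ (δ x))
  ∧ (∀ x y, δ (l x y) = l (δ x) (γ^[s] (ξ^[t] y)) + l (γ^[s] (ξ^[t] x)) (δ y))
  ∧ (∀ x y, δ (r x y) = r (δ x) (γ^[s] (ξ^[t] y)) + r (γ^[s] (ξ^[t] x)) (δ y))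
  ∧ (∀ x y, δ (m x y) = m (δ x) (γ^[s] (ξ^[t] y)) + m (γ^[s] (ξ^[t] x)) (δ y))

private lemma comm_iter {S : Type*} {f g : S → S} (h : ∀ x, f (g x) = g (f x)) (n : ℕ) :
    ∀ x, f (g^[n] x) = g^[n] (f x) := by
  induction n with
  | zero => simp
  | succ n ih =>
    intro x
    rw [Function.iterate_succ_apply', h, ih, Function.iterate_succ_apply']

private lemma op_sub_left {S : Type*} [AddCommGroup S] {op : S → S → S}
    (hadd : ∀ x y z : S, op (x + y) z = op x z + op y z) (x y z : S) :
    op (x - y) z = op x z - op y z := by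
  have := hadd (x - y) y z
  rw [sub_add_cancel] at this
  rw [eq_sub_iff_add_eq, ← this]

private lemma op_sub_right {S : Type*} [AddCommGroup S] {op : S → S → S}
    (hadd : ∀ x y z : S, op x (y + z) = op x y + op x z) (x y z : S) :
    op x (y - z) = op x y - op x z := by
  have := hadd x (y - z) z
  rw [sub_add_cancel] at this
  rw [eq_sub_iff_add_eq, ← this]

private lemma comm_leibniz {S : Type*} [AddCommGroup S] {op : S → S → S}
    (haddl : ∀ x y z : S, op (x + y) z = op x z + op y z)
    (haddr : ∀ x y z : S, op x (y + z) = op x y + op x z)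
    {δ δ' T T' : S → S}
    (hδlin : ∀ x y : S, δ (x + y) = δ x + δ y)
    (hδ'lin : ∀ x y : S, δ' (x + y) = δ' x + δ' y)
    (hδop : ∀ x y, δ (op x y) = op (δ x) (T y) + op (T x) (δ y))
    (hδ'op : ∀ x y, δ' (op x y) = op (δ' x) (T' y) + op (T' x) (δ' y))
    (hδT' : ∀ x, δ (T' x) = T' (δ x))
    (hδ'T : ∀ x, δ' (T x) = T (δ' x))
    (hTT' : ∀ x, T (T' x) = T' (T x)) (x y : S) :
    δ (δ' (op x y)) - δ' (δ (op x y))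
      = op (δ (δ' x) - δ' (δ x)) (T (T' y)) + op (T (T' x)) (δ (δ' y) - δ' (δ y)) := by
  rw [hδ'op, hδop, hδlin, hδ'lin, hδop, hδop, hδ'op, hδ'op, hδT', hδT', hδ'T, hδ'T, hTT', hTT',
    op_sub_left haddl, op_sub_right haddr]
  abel

/-- The commutator of a `(γ^s ξ^r)`-derivation and a `(γ^{s'} ξ^{r'})`-derivation is a
`(γ^{s+s'} ξ^{r+r'})`-derivation. -/
theorem commutator_isGsxDerivation
    (F : Type*) [Field F] {S : Type*} [AddCommGroup S] [Module F S]
    (l r m : S → S → S) (γ ξ : S → S)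
    (h : IsBiHomTrialgebra F l r m γ ξ)
    (s t s' t' : ℕ) (δ δ' : S → S)
    (hδ : IsGsxDerivation F l r m γ ξ s t δ)
    (hδ' : IsGsxDerivation F l r m γ ξ s' t' δ') :
    IsGsxDerivation F l r m γ ξ (s + s') (t + t') (fun x => δ (δ' x) - δ' (δ x)) := by
  obtain ⟨hδlin, hδγ, hδξ, hδl, hδr, hδm⟩ := hδ
  obtain ⟨hδ'lin, hδ'γ, hδ'ξ, hδ'l, hδ'r, hδ'm⟩ := hδ'
  set T : S → S := fun z => γ^[s] (ξ^[t] z) with hT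
  set T' : S → S := fun z => γ^[s'] (ξ^[t'] z) with hT'
  -- γ iterates commute with ξ iterates
  have hgx : ∀ (a b : ℕ) (x : S), γ^[a] (ξ^[b] x) = ξ^[b] (γ^[a] x) := by
    intro a b
    have h1 : ∀ x, γ (ξ^[b] x) = ξ^[b] (γ x) := comm_iter h.gamma_xi_comm b
    have h2 := comm_iter (f := ξ^[b]) (g := γ) (fun x => (h1 x).symm) a
    exact fun x => (h2 x).symm
  have hδT' : ∀ x, δ (T' x) = T' (δ x) := by
    intro x
    simp only [hT']
    rw [comm_iter hδγ s', comm_iter hδξ t']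
  have hδ'T : ∀ x, δ' (T x) = T (δ' x) := by
    intro x
    simp only [hT]
    rw [comm_iter hδ'γ s, comm_iter hδ'ξ t]
  have hTT' : ∀ x, T (T' x) = T' (T x) := by
    intro x
    simp only [hT, hT']
    rw [← hgx s' t, ← hgx s t', ← Function.iterate_add_apply γ, ← Function.iterate_add_apply ξ,
      ← Function.iterate_add_apply γ, ← Function.iterate_add_apply ξ,
      Nat.add_comm s s', Nat.add_comm t t']
  have htwist : ∀ x : S, γ^[s + s'] (ξ^[t + t'] x) = T (T' x) := by
    intro x
    simp only [hT, hT']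
    rw [Function.iterate_add_apply γ, Function.iterate_add_apply ξ, hgx s' t]
  refine ⟨⟨?_, ?_⟩, ?_, ?_, ?_, ?_, ?_⟩
  · intro x y
    simp only [hδlin.map_add, hδ'lin.map_add]
    abel
  · intro a x
    simp only [hδlin.map_smul, hδ'lin.map_smul, smul_sub]
  · intro x
    simp only [hδγ, hδ'γ]
    exact (h.gamma_linear.map_sub _ _).symm
  · intro x
    simp only [hδξ, hδ'ξ]
    exact (h.xi_linear.map_sub _ _).symm
  · intro x y
    simp only [htwist]
    exact comm_leibniz h.l_add_left h.l_add_right hδlin.map_add hδ'lin.map_add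
      hδl hδ'l hδT' hδ'T hTT' x y
  · intro x y
    simp only [htwist]
    exact comm_leibniz h.r_add_left h.r_add_right hδlin.map_add hδ'lin.map_add
      hδr hδ'r hδT' hδ'T hTT' x y
  · intro x y
    simp only [htwist]
    exact comm_leibniz h.m_add_left h.m_add_right hδlin.map_add hδ'lin.map_add
      hδm hδ'm hδT' hδ'T hTT' x y
end

section
/- Let (S,⊣,⊢,⊥,γ,ξ) be a BiHom-associative trialgebra over a field F with γ and ξ bijective, let s, r, s′, r′ be nonnegative integers, let δ₁ be a (γ^s ξ^r)-central derivation of S and let δ₂ be a (γ^{s′} ξ^{r′})-derivation of S. Then the commutator [δ₁,δ₂] = δ₁∘δ₂ − δ₂∘δ₁ is a (γ^{s+s′} ξ^{r+r′})-central derivation of S. (In particular, the space of central derivations is an ideal of the Lie algebra of derivations.) -/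
/-- A `(γ^s ξ^r)`-central derivation of a BiHom-associative trialgebra. -/
def IsGsxCentralDerivation (F : Type*) [Field F] {S : Type*} [AddCommGroup S] [Module F S]
    (l r m : S → S → S) (γ ξ : S → S) (s t : ℕ) (δ : S → S) : Prop :=
  IsLinearMap F δ ∧ (∀ x, δ (γ x) = γ (δ x)) ∧ (∀ x, δ (ξ x) = ξ (δ x))
  ∧ (∀ x y : S, δ (l x y) = 0)
  ∧ (∀ x y : S, l (δ x) (γ^[s] (ξ^[t] y)) = 0)
  ∧ (∀ x y : S, l (γ^[s] (ξ^[t] x)) (δ y) = 0)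
  ∧ (∀ x y : S, δ (r x y) = 0)
  ∧ (∀ x y : S, r (δ x) (γ^[s] (ξ^[t] y)) = 0)
  ∧ (∀ x y : S, r (γ^[s] (ξ^[t] x)) (δ y) = 0)
  ∧ (∀ x y : S, δ (m x y) = 0)
  ∧ (∀ x y : S, m (δ x) (γ^[s] (ξ^[t] y)) = 0)
  ∧ (∀ x y : S, m (γ^[s] (ξ^[t] x)) (δ y) = 0)

/-- The commutator of a `(γ^s ξ^r)`-central derivation with a `(γ^{s'} ξ^{r'})`-derivation is a
`(γ^{s+s'} ξ^{r+r'})`-central derivation (so central derivations form an ideal of the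
derivations), assuming `γ` and `ξ` are bijective. -/
theorem commutator_central_derivation
    (F : Type*) [Field F] {S : Type*} [AddCommGroup S] [Module F S]
    (l r m : S → S → S) (γ ξ : S → S)
    (h : IsBiHomTrialgebra F l r m γ ξ)
    (hγ : Function.Bijective γ) (hξ : Function.Bijective ξ)
    (s t s' t' : ℕ) (δ₁ δ₂ : S → S)
    (hδ₁ : IsGsxCentralDerivation F l r m γ ξ s t δ₁)
    (hδ₂ : IsGsxDerivation F l r m γ ξ s' t' δ₂) :
    IsGsxCentralDerivation F l r m γ ξ (s + s') (t + t') (fun x => δ₁ (δ₂ x) - δ₂ (δ₁ x)) := by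
  obtain ⟨h1lin, h1γ, h1ξ, hl0, hlL, hlR, hr0, hrL, hrR, hm0, hmL, hmR⟩ := hδ₁
  obtain ⟨h2lin, h2γ, h2ξ, h2l, h2r, h2m⟩ := hδ₂
  have hcγ : Function.Commute γ ξ := h.gamma_xi_comm
  have hcom : ∀ a b (x : S), γ^[a] (ξ^[b] x) = ξ^[b] (γ^[a] x) :=
    fun a b x => ((hcγ.iterate_left a).iterate_right b) x
  have iterδ : ∀ (δ : S → S), (∀ x, δ (γ x) = γ (δ x)) → (∀ x, δ (ξ x) = ξ (δ x)) →
      ∀ a b x, δ (γ^[a] (ξ^[b] x)) = γ^[a] (ξ^[b] (δ x)) := by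
    intro δ hg hx a b x
    have hg' : Function.Commute δ γ := hg
    have hx' : Function.Commute δ ξ := hx
    rw [(hg'.iterate_right a) (ξ^[b] x), (hx'.iterate_right b) x]
  have hT1 : ∀ z : S, γ^[s+s'] (ξ^[t+t'] z) = γ^[s] (ξ^[t] (γ^[s'] (ξ^[t'] z))) := by
    intro z
    rw [Function.iterate_add_apply, Function.iterate_add_apply]
    exact congrArg (γ^[s]) (hcom s' t _)
  have hT2 : ∀ z : S, γ^[s+s'] (ξ^[t+t'] z) = γ^[s'] (ξ^[t'] (γ^[s] (ξ^[t] z))) := by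
    intro z
    rw [add_comm s s', add_comm t t', Function.iterate_add_apply, Function.iterate_add_apply]
    exact congrArg (γ^[s']) (hcom s t' _)
  have key : ∀ (op : S → S → S),
      (∀ x y z : S, op (x + y) z = op x z + op y z) →
      (∀ x y z : S, op x (y + z) = op x y + op x z) →
      (∀ (a : F) (x y : S), op (a • x) y = a • op x y) →
      (∀ (a : F) (x y : S), op x (a • y) = a • op x y) →
      (∀ x y : S, δ₁ (op x y) = 0) →
      (∀ x y : S, op (δ₁ x) (γ^[s] (ξ^[t] y)) = 0) →
      (∀ x y : S, op (γ^[s] (ξ^[t] x)) (δ₁ y) = 0) →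
      (∀ x y : S, δ₂ (op x y) = op (δ₂ x) (γ^[s'] (ξ^[t'] y)) + op (γ^[s'] (ξ^[t'] x)) (δ₂ y)) →
      ((∀ x y : S, δ₁ (δ₂ (op x y)) - δ₂ (δ₁ (op x y)) = 0)
       ∧ (∀ x y : S, op (δ₁ (δ₂ x) - δ₂ (δ₁ x)) (γ^[s+s'] (ξ^[t+t'] y)) = 0)
       ∧ (∀ x y : S, op (γ^[s+s'] (ξ^[t+t'] x)) (δ₁ (δ₂ y) - δ₂ (δ₁ y)) = 0)) := by
    intro op hadd hadd' hsm hsm' h0 hL hR hd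
    have subl : ∀ a b c : S, op (a - b) c = op a c - op b c := by
      intro a b c
      rw [sub_eq_add_neg, sub_eq_add_neg, hadd, ← neg_one_smul F b, hsm, neg_one_smul]
    have subr : ∀ a b c : S, op a (b - c) = op a b - op a c := by
      intro a b c
      rw [sub_eq_add_neg, sub_eq_add_neg, hadd', ← neg_one_smul F c, hsm', neg_one_smul]
    refine ⟨?_, ?_, ?_⟩
    · intro x y
      rw [h0, h2lin.map_zero, hd, h1lin.map_add, h0, h0]
      simp
    · intro x y
      have e1 : op (δ₁ (δ₂ x)) (γ^[s+s'] (ξ^[t+t'] y)) = 0 := by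
        rw [hT1]; exact hL _ _
      have e2 : op (δ₂ (δ₁ x)) (γ^[s+s'] (ξ^[t+t'] y)) = 0 := by
        have h5 := hd (δ₁ x) (γ^[s] (ξ^[t] y))
        rw [hL x y, h2lin.map_zero] at h5
        have z2 : op (γ^[s'] (ξ^[t'] (δ₁ x))) (δ₂ (γ^[s] (ξ^[t] y))) = 0 := by
          rw [← iterδ δ₁ h1γ h1ξ s' t' x, iterδ δ₂ h2γ h2ξ s t y]
          exact hL _ _
        rw [z2, add_zero] at h5
        rw [hT2]
        exact h5.symm
      rw [subl, e1, e2, sub_zero]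
    · intro x y
      have e1 : op (γ^[s+s'] (ξ^[t+t'] x)) (δ₁ (δ₂ y)) = 0 := by
        rw [hT1]; exact hR _ _
      have e2 : op (γ^[s+s'] (ξ^[t+t'] x)) (δ₂ (δ₁ y)) = 0 := by
        have h5 := hd (γ^[s] (ξ^[t] x)) (δ₁ y)
        rw [hR x y, h2lin.map_zero] at h5
        have z2 : op (δ₂ (γ^[s] (ξ^[t] x))) (γ^[s'] (ξ^[t'] (δ₁ y))) = 0 := by
          rw [iterδ δ₂ h2γ h2ξ s t x, ← iterδ δ₁ h1γ h1ξ s' t' y]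
          exact hR _ _
        rw [z2, zero_add] at h5
        rw [hT2]
        exact h5.symm
      rw [subr, e1, e2, sub_zero]
  have kl := key l h.l_add_left h.l_add_right h.l_smul_left h.l_smul_right hl0 hlL hlR h2l
  have kr := key r h.r_add_left h.r_add_right h.r_smul_left h.r_smul_right hr0 hrL hrR h2r
  have km := key m h.m_add_left h.m_add_right h.m_smul_left h.m_smul_right hm0 hmL hmR h2m
  refine ⟨⟨?_, ?_⟩, ?_, ?_, kl.1, kl.2.1, kl.2.2, kr.1, kr.2.1, kr.2.2, km.1, km.2.1, km.2.2⟩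
  · intro x y
    simp only [h2lin.map_add, h1lin.map_add]
    abel
  · intro a x
    simp only [h2lin.map_smul, h1lin.map_smul, smul_sub]
  · intro x
    simp only [h2γ, h1γ]
    exact (h.gamma_linear.map_sub _ _).symm
  · intro x
    simp only [h2ξ, h1ξ]
    exact (h.xi_linear.map_sub _ _).symm
end

section
/- Let (S,⊣,⊢,⊥,γ,ξ) be a BiHom-associative trialgebra over a field F, let s, r, s′, r′ be nonnegative integers, let δ be a (γ^s ξ^r)-derivation of S and let c be a (γ^{s′} ξ^{r′})-centroid element of S. Then the commutator [δ,c] = δ∘c − c∘δ is a (γ^{s+s′} ξ^{r+r′})-centroid element of S; that is, [D(S), C(S)] ⊆ C(S). -/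
/-- A `(γ^s ξ^r)`-centroid element of a BiHom-associative trialgebra. -/
def IsGsxCentroid (F : Type*) [Field F] {S : Type*} [AddCommGroup S] [Module F S]
    (l r m : S → S → S) (γ ξ : S → S) (s t : ℕ) (c : S → S) : Prop :=
  IsLinearMap F c ∧ (∀ x, c (γ x) = γ (c x)) ∧ (∀ x, c (ξ x) = ξ (c x))
  ∧ (∀ x y : S, c (l x y) = l (c x) (γ^[s] (ξ^[t] y)))
  ∧ (∀ x y : S, c (l x y) = l (γ^[s] (ξ^[t] x)) (c y))
  ∧ (∀ x y : S, c (r x y) = r (c x) (γ^[s] (ξ^[t] y)))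
  ∧ (∀ x y : S, c (r x y) = r (γ^[s] (ξ^[t] x)) (c y))
  ∧ (∀ x y : S, c (m x y) = m (c x) (γ^[s] (ξ^[t] y)))
  ∧ (∀ x y : S, c (m x y) = m (γ^[s] (ξ^[t] x)) (c y))

private lemma iter_comm {S : Type*} {f g : S → S} (h : ∀ x, f (g x) = g (f x)) :
    ∀ (n : ℕ) (x : S), f (g^[n] x) = g^[n] (f x) := by
  intro n
  induction n with
  | zero => intro x; simp
  | succ k ih =>
    intro x
    rw [Function.iterate_succ_apply', h, ih]
    exact (Function.iterate_succ_apply' g k (f x)).symm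

/-- The commutator of a `(γ^s ξ^r)`-derivation and a `(γ^{s'} ξ^{r'})`-centroid element is a
`(γ^{s+s'} ξ^{r+r'})`-centroid element: `[D(S), C(S)] ⊆ C(S)`. -/
theorem commutator_derivation_centroid
    (F : Type*) [Field F] {S : Type*} [AddCommGroup S] [Module F S]
    (l r m : S → S → S) (γ ξ : S → S)
    (h : IsBiHomTrialgebra F l r m γ ξ)
    (s t s' t' : ℕ) (δ c : S → S)
    (hδ : IsGsxDerivation F l r m γ ξ s t δ)
    (hc : IsGsxCentroid F l r m γ ξ s' t' c) :
    IsGsxCentroid F l r m γ ξ (s + s') (t + t') (fun x => δ (c x) - c (δ x)) := by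
  obtain ⟨hδlin, hδγ, hδξ, hδl, hδr, hδm⟩ := hδ
  obtain ⟨hclin, hcγ, hcξ, hcl, hcl', hcr, hcr', hcm, hcm'⟩ := hc
  -- commutation facts with iterates
  have hδT' : ∀ x, δ (γ^[s'] (ξ^[t'] x)) = γ^[s'] (ξ^[t'] (δ x)) := by
    intro x
    rw [iter_comm hδγ, iter_comm hδξ]
  have hcT : ∀ x, c (γ^[s] (ξ^[t] x)) = γ^[s] (ξ^[t] (c x)) := by
    intro x
    rw [iter_comm hcγ, iter_comm hcξ]
  have hγξ : ∀ (a b : ℕ) (x : S), ξ^[b] (γ^[a] x) = γ^[a] (ξ^[b] x) := by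
    intro a b x
    have A : ∀ x, ξ^[b] (γ x) = γ (ξ^[b] x) := fun x =>
      (iter_comm (fun y => h.gamma_xi_comm y) b x).symm
    exact iter_comm A a x
  have hTT' : ∀ y : S, γ^[s] (ξ^[t] (γ^[s'] (ξ^[t'] y))) = γ^[s + s'] (ξ^[t + t'] y) := by
    intro y
    rw [hγξ, Function.iterate_add_apply γ s s', Function.iterate_add_apply ξ t t']
  have hT'T : ∀ y : S, γ^[s'] (ξ^[t'] (γ^[s] (ξ^[t] y))) = γ^[s + s'] (ξ^[t + t'] y) := by
    intro y
    rw [hγξ, add_comm s s', add_comm t t',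
      Function.iterate_add_apply γ s' s, Function.iterate_add_apply ξ t' t]
  -- subtraction distributivity
  have sub_left : ∀ (op : S → S → S), (∀ x y z, op (x + y) z = op x z + op y z) →
      (∀ (a : F) (x y : S), op (a • x) y = a • op x y) →
      ∀ x y z : S, op (x - y) z = op x z - op y z := by
    intro op hadd hsmul x y z
    rw [sub_eq_add_neg, hadd, ← neg_one_smul F y, hsmul, neg_one_smul, ← sub_eq_add_neg]
  have sub_right : ∀ (op : S → S → S), (∀ x y z, op x (y + z) = op x y + op x z) →
      (∀ (a : F) (x y : S), op x (a • y) = a • op x y) →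
      ∀ x y z : S, op x (y - z) = op x y - op x z := by
    intro op hadd hsmul x y z
    rw [sub_eq_add_neg, hadd, ← neg_one_smul F z, hsmul, neg_one_smul, ← sub_eq_add_neg]
  -- generic computation for the "left" centroid identity
  have key1 : ∀ (op : S → S → S),
      (∀ x y z, op (x + y) z = op x z + op y z) →
      (∀ (a : F) (x y : S), op (a • x) y = a • op x y) →
      (∀ x y, δ (op x y) = op (δ x) (γ^[s] (ξ^[t] y)) + op (γ^[s] (ξ^[t] x)) (δ y)) →
      (∀ x y, c (op x y) = op (c x) (γ^[s'] (ξ^[t'] y))) →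
      ∀ x y : S, δ (c (op x y)) - c (δ (op x y))
        = op (δ (c x) - c (δ x)) (γ^[s + s'] (ξ^[t + t'] y)) := by
    intro op hadd hsmul hδop hcop x y
    have e1 : δ (c (op x y)) = op (δ (c x)) (γ^[s + s'] (ξ^[t + t'] y))
        + op (γ^[s] (ξ^[t] (c x))) (γ^[s'] (ξ^[t'] (δ y))) := by
      rw [hcop, hδop, hTT', hδT']
    have e2 : c (δ (op x y)) = op (c (δ x)) (γ^[s + s'] (ξ^[t + t'] y))
        + op (γ^[s] (ξ^[t] (c x))) (γ^[s'] (ξ^[t'] (δ y))) := by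
      rw [hδop, hclin.map_add, hcop, hcop, hT'T, hcT]
    rw [e1, e2, sub_left op hadd hsmul]
    abel
  -- generic computation for the "right" centroid identity
  have key2 : ∀ (op : S → S → S),
      (∀ x y z, op x (y + z) = op x y + op x z) →
      (∀ (a : F) (x y : S), op x (a • y) = a • op x y) →
      (∀ x y, δ (op x y) = op (δ x) (γ^[s] (ξ^[t] y)) + op (γ^[s] (ξ^[t] x)) (δ y)) →
      (∀ x y, c (op x y) = op (γ^[s'] (ξ^[t'] x)) (c y)) →
      ∀ x y : S, δ (c (op x y)) - c (δ (op x y))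
        = op (γ^[s + s'] (ξ^[t + t'] x)) (δ (c y) - c (δ y)) := by
    intro op hadd hsmul hδop hcop x y
    have e1 : δ (c (op x y)) = op (γ^[s'] (ξ^[t'] (δ x))) (γ^[s] (ξ^[t] (c y)))
        + op (γ^[s + s'] (ξ^[t + t'] x)) (δ (c y)) := by
      rw [hcop, hδop, hTT', hδT']
    have e2 : c (δ (op x y)) = op (γ^[s'] (ξ^[t'] (δ x))) (γ^[s] (ξ^[t] (c y)))
        + op (γ^[s + s'] (ξ^[t + t'] x)) (c (δ y)) := by
      rw [hδop, hclin.map_add, hcop, hcop, hT'T, hcT]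
    rw [e1, e2, sub_right op hadd hsmul]
    abel
  refine ⟨⟨fun x y => ?_, fun a x => ?_⟩, fun x => ?_, fun x => ?_,
    key1 l h.l_add_left h.l_smul_left hδl hcl,
    key2 l h.l_add_right h.l_smul_right hδl hcl',
    key1 r h.r_add_left h.r_smul_left hδr hcr,
    key2 r h.r_add_right h.r_smul_right hδr hcr',
    key1 m h.m_add_left h.m_smul_left hδm hcm,
    key2 m h.m_add_right h.m_smul_right hδm hcm'⟩
  · show δ (c (x + y)) - c (δ (x + y)) = _
    rw [hclin.map_add, hδlin.map_add, hδlin.map_add, hclin.map_add]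
    abel
  · show δ (c (a • x)) - c (δ (a • x)) = _
    rw [hclin.map_smul, hδlin.map_smul, hδlin.map_smul, hclin.map_smul, smul_sub]
  · show δ (c (γ x)) - c (δ (γ x)) = γ (δ (c x) - c (δ x))
    rw [hcγ, hδγ, hδγ, hcγ, h.gamma_linear.map_sub]
  · show δ (c (ξ x)) - c (δ (ξ x)) = ξ (δ (c x) - c (δ x))
    rw [hcξ, hδξ, hδξ, hcξ, h.xi_linear.map_sub]
end

section
/- Let (S,⊣,⊢,⊥,γ,ξ) be a BiHom-associative trialgebra over a field F, let s, r, s′, r′ be nonnegative integers, let δ be a (γ^s ξ^r)-derivation of S and let c be a (γ^{s′} ξ^{r′})-centroid element of S. Then the composition c∘δ is a (γ^{s+s′} ξ^{r+r′})-derivation of S; that is, C(S)∘D(S) ⊆ D(S). -/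
/-- The composition of a `(γ^{s'} ξ^{r'})`-centroid element with a `(γ^s ξ^r)`-derivation is a
`(γ^{s+s'} ξ^{r+r'})`-derivation: `C(S) ∘ D(S) ⊆ D(S)`. -/
theorem centroid_comp_derivation
    (F : Type*) [Field F] {S : Type*} [AddCommGroup S] [Module F S]
    (l r m : S → S → S) (γ ξ : S → S)
    (h : IsBiHomTrialgebra F l r m γ ξ)
    (s t s' t' : ℕ) (δ c : S → S)
    (hδ : IsGsxDerivation F l r m γ ξ s t δ)
    (hc : IsGsxCentroid F l r m γ ξ s' t' c) :
    IsGsxDerivation F l r m γ ξ (s + s') (t + t') (fun x => c (δ x)) := by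
  obtain ⟨δlin, δγ, δξ, δl, δr, δm⟩ := hδ
  obtain ⟨clin, cγ, cξ, cl1, cl2, cr1, cr2, cm1, cm2⟩ := hc
  have hcomm : Function.Commute γ ξ := h.gamma_xi_comm
  have key : ∀ y : S, γ^[s + s'] (ξ^[t + t'] y)
      = γ^[s'] (ξ^[t'] (γ^[s] (ξ^[t] y))) := by
    intro y
    rw [add_comm s s', add_comm t t', Function.iterate_add_apply,
      Function.iterate_add_apply]
    exact congrArg (γ^[s']) ((hcomm.iterate_iterate s t') (ξ^[t] y))
  refine ⟨⟨fun a b => by rw [δlin.map_add, clin.map_add],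
      fun a b => by rw [δlin.map_smul, clin.map_smul]⟩,
    fun x => by simp only [δγ, cγ], fun x => by simp only [δξ, cξ], ?_, ?_, ?_⟩
  · intro x y
    simp only [δl, clin.map_add, cl1, key]
    congr 1
    exact (cl1 _ _).symm.trans (cl2 _ _)
  · intro x y
    simp only [δr, clin.map_add, cr1, key]
    congr 1
    exact (cr1 _ _).symm.trans (cr2 _ _)
  · intro x y
    simp only [δm, clin.map_add, cm1, key]
    congr 1
    exact (cm1 _ _).symm.trans (cm2 _ _)
end

section
/- Let (S,⊣,⊢,⊥,γ,ξ) be a BiHom-associative trialgebra over a field F, let s, r be nonnegative integers, let δ be a (γ^s ξ^r)-quasiderivation of S and let c be a (γ^s ξ^r)-quasicentroid element of S. Then the sum δ + c is a generalized (γ^s ξ^r)-derivation of S; that is, QD(S) + QC(S) ⊆ GD(S). -/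
/-- A `(γ^s ξ^r)`-quasiderivation of a BiHom-associative trialgebra. -/
def IsGsxQuasiDerivation (F : Type*) [Field F] {S : Type*} [AddCommGroup S] [Module F S]
    (l r m : S → S → S) (γ ξ : S → S) (s t : ℕ) (δ : S → S) : Prop :=
  IsLinearMap F δ ∧ (∀ x, δ (γ x) = γ (δ x)) ∧ (∀ x, δ (ξ x) = ξ (δ x))
  ∧ ∃ δ' : S → S, IsLinearMap F δ' ∧ (∀ x, δ' (γ x) = γ (δ' x)) ∧ (∀ x, δ' (ξ x) = ξ (δ' x))
      ∧ (∀ x y, δ' (l x y) = l (δ x) (γ^[s] (ξ^[t] y)) + l (γ^[s] (ξ^[t] x)) (δ y))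
      ∧ (∀ x y, δ' (r x y) = r (δ x) (γ^[s] (ξ^[t] y)) + r (γ^[s] (ξ^[t] x)) (δ y))
      ∧ (∀ x y, δ' (m x y) = m (δ x) (γ^[s] (ξ^[t] y)) + m (γ^[s] (ξ^[t] x)) (δ y))

/-- A `(γ^s ξ^r)`-quasicentroid element of a BiHom-associative trialgebra. -/
def IsGsxQuasiCentroid (F : Type*) [Field F] {S : Type*} [AddCommGroup S] [Module F S]
    (l r m : S → S → S) (γ ξ : S → S) (s t : ℕ) (c : S → S) : Prop :=
  IsLinearMap F c ∧ (∀ x, c (γ x) = γ (c x)) ∧ (∀ x, c (ξ x) = ξ (c x))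
  ∧ (∀ x y : S, l (c x) (γ^[s] (ξ^[t] y)) = l (γ^[s] (ξ^[t] x)) (c y))
  ∧ (∀ x y : S, r (c x) (γ^[s] (ξ^[t] y)) = r (γ^[s] (ξ^[t] x)) (c y))
  ∧ (∀ x y : S, m (c x) (γ^[s] (ξ^[t] y)) = m (γ^[s] (ξ^[t] x)) (c y))

/-- A generalized `(γ^s ξ^r)`-derivation of a BiHom-associative trialgebra. -/
def IsGsxGeneralizedDerivation (F : Type*) [Field F] {S : Type*} [AddCommGroup S] [Module F S]
    (l r m : S → S → S) (γ ξ : S → S) (s t : ℕ) (δ : S → S) : Prop :=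
  IsLinearMap F δ ∧ (∀ x, δ (γ x) = γ (δ x)) ∧ (∀ x, δ (ξ x) = ξ (δ x))
  ∧ ∃ δ' δ'' : S → S,
      IsLinearMap F δ' ∧ (∀ x, δ' (γ x) = γ (δ' x)) ∧ (∀ x, δ' (ξ x) = ξ (δ' x))
      ∧ IsLinearMap F δ'' ∧ (∀ x, δ'' (γ x) = γ (δ'' x)) ∧ (∀ x, δ'' (ξ x) = ξ (δ'' x))
      ∧ (∀ x y, δ'' (l x y) = l (δ x) (γ^[s] (ξ^[t] y)) + l (γ^[s] (ξ^[t] x)) (δ' y))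
      ∧ (∀ x y, δ'' (r x y) = r (δ x) (γ^[s] (ξ^[t] y)) + r (γ^[s] (ξ^[t] x)) (δ' y))
      ∧ (∀ x y, δ'' (m x y) = m (δ x) (γ^[s] (ξ^[t] y)) + m (γ^[s] (ξ^[t] x)) (δ' y))

/-- The sum of a `(γ^s ξ^r)`-quasiderivation and a `(γ^s ξ^r)`-quasicentroid element is a
generalized `(γ^s ξ^r)`-derivation: `QD(S) + QC(S) ⊆ GD(S)`. -/
theorem quasiderivation_add_quasicentroid
    (F : Type*) [Field F] {S : Type*} [AddCommGroup S] [Module F S]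
    (l r m : S → S → S) (γ ξ : S → S)
    (h : IsBiHomTrialgebra F l r m γ ξ)
    (s t : ℕ) (δ c : S → S)
    (hδ : IsGsxQuasiDerivation F l r m γ ξ s t δ)
    (hc : IsGsxQuasiCentroid F l r m γ ξ s t c) :
    IsGsxGeneralizedDerivation F l r m γ ξ s t (fun x => δ x + c x) := by
  obtain ⟨hδlin, hδγ, hδξ, δ', hδ'lin, hδ'γ, hδ'ξ, hl, hr, hm⟩ := hδ
  obtain ⟨hclin, hcγ, hcξ, hcl, hcr, hcm⟩ := hc
  refine ⟨⟨fun x y => by rw [hδlin.map_add, hclin.map_add]; abel,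
      fun a x => by rw [hδlin.map_smul, hclin.map_smul, smul_add]⟩,
    fun x => by show δ (γ x) + c (γ x) = γ (δ x + c x); rw [hδγ, hcγ, (h.gamma_linear).map_add],
    fun x => by show δ (ξ x) + c (ξ x) = ξ (δ x + c x); rw [hδξ, hcξ, (h.xi_linear).map_add],
    fun x => δ x - c x, δ', ?_, ?_, ?_, hδ'lin, hδ'γ, hδ'ξ, ?_, ?_, ?_⟩
  · exact ⟨fun x y => by rw [hδlin.map_add, hclin.map_add]; abel,
      fun a x => by rw [hδlin.map_smul, hclin.map_smul, smul_sub]⟩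
  · intro x; show δ (γ x) - c (γ x) = γ (δ x - c x); rw [hδγ, hcγ, (h.gamma_linear).map_sub]
  · intro x; show δ (ξ x) - c (ξ x) = ξ (δ x - c x); rw [hδξ, hcξ, (h.xi_linear).map_sub]
  · intro x y
    have hsub : ∀ a b u : S, l (a + b) u = l a u + l b u := h.l_add_left
    rw [hl x y]
    have h1 : l (δ x + c x) (γ^[s] (ξ^[t] y)) = l (δ x) (γ^[s] (ξ^[t] y)) + l (c x) (γ^[s] (ξ^[t] y)) := h.l_add_left _ _ _
    have h2 : l (γ^[s] (ξ^[t] x)) (δ y - c y) = l (γ^[s] (ξ^[t] x)) (δ y) - l (γ^[s] (ξ^[t] x)) (c y) := by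
      rw [sub_eq_add_neg, h.l_add_right, sub_eq_add_neg]
      congr 1
      have := h.l_smul_right (-1 : F) (γ^[s] (ξ^[t] x)) (c y)
      simpa using this
    rw [h1, h2, hcl x y]; abel
  · intro x y
    rw [hr x y]
    have h1 : r (δ x + c x) (γ^[s] (ξ^[t] y)) = r (δ x) (γ^[s] (ξ^[t] y)) + r (c x) (γ^[s] (ξ^[t] y)) := h.r_add_left _ _ _
    have h2 : r (γ^[s] (ξ^[t] x)) (δ y - c y) = r (γ^[s] (ξ^[t] x)) (δ y) - r (γ^[s] (ξ^[t] x)) (c y) := by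
      rw [sub_eq_add_neg, h.r_add_right, sub_eq_add_neg]
      congr 1
      have := h.r_smul_right (-1 : F) (γ^[s] (ξ^[t] x)) (c y)
      simpa using this
    rw [h1, h2, hcr x y]; abel
  · intro x y
    rw [hm x y]
    have h1 : m (δ x + c x) (γ^[s] (ξ^[t] y)) = m (δ x) (γ^[s] (ξ^[t] y)) + m (c x) (γ^[s] (ξ^[t] y)) := h.m_add_left _ _ _
    have h2 : m (γ^[s] (ξ^[t] x)) (δ y - c y) = m (γ^[s] (ξ^[t] x)) (δ y) - m (γ^[s] (ξ^[t] x)) (c y) := by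
      rw [sub_eq_add_neg, h.m_add_right, sub_eq_add_neg]
      congr 1
      have := h.m_smul_right (-1 : F) (γ^[s] (ξ^[t] x)) (c y)
      simpa using this
    rw [h1, h2, hcm x y]; abel
end

section
/- Let (S,⊣,⊢,⊥,γ,ξ) be a BiHom-associative trialgebra over a field F of characteristic different from 2 with γ and ξ bijective, and suppose the center Z(S) is trivial, i.e. Z(S) = {0}. Then for any nonnegative integers s, r, every linear map δ : S → S that is simultaneously a (γ^s ξ^r)-derivation and a (γ^s ξ^r)-centroid element of S is zero; that is, D_{(γ^s ξ^r)}(S) ∩ C_{(γ^s ξ^r)}(S) = {0}, so the sum D(S) + C(S) inside QD(S) is direct. -/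
/-- If the BiHom-associative trialgebra has trivial center (and `γ`, `ξ` are bijective,
`char F ≠ 2`), then any map which is simultaneously a `(γ^s ξ^r)`-derivation and a
`(γ^s ξ^r)`-centroid element vanishes: `D_{(γ^s ξ^r)}(S) ∩ C_{(γ^s ξ^r)}(S) = {0}`,
so `D(S) + C(S) ⊆ QD(S)` is a direct sum. -/
theorem derivation_inter_centroid_trivial
    (F : Type*) [Field F] {S : Type*} [AddCommGroup S] [Module F S]
    (l r m : S → S → S) (γ ξ : S → S)
    (h : IsBiHomTrialgebra F l r m γ ξ)
    (hchar : (2 : F) ≠ 0)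
    (hγ : Function.Bijective γ) (hξ : Function.Bijective ξ)
    (hZ : ∀ u : S,
      (∀ x : S, l u x = 0 ∧ l x u = 0 ∧ r u x = 0 ∧ r x u = 0 ∧ m u x = 0 ∧ m x u = 0)
        → u = 0) :
    ∀ (s t : ℕ) (δ : S → S),
      IsGsxDerivation F l r m γ ξ s t δ → IsGsxCentroid F l r m γ ξ s t δ →
        ∀ x : S, δ x = 0 := by
  intro s t δ hD hC x
  obtain ⟨_, _, _, hDl, hDr, hDm⟩ := hD
  obtain ⟨_, _, _, hCl1, hCl2, hCr1, hCr2, hCm1, hCm2⟩ := hC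
  -- t is surjective
  have hT : Function.Surjective (fun z => γ^[s] (ξ^[t] z)) := by
    exact (hγ.iterate s).surjective.comp (hξ.iterate t).surjective
  -- products with δ vanish
  have hl1 : ∀ a b : S, l (γ^[s] (ξ^[t] a)) (δ b) = 0 := by
    intro a b
    have := hDl a b
    rw [← hCl1 a b] at this
    exact (add_eq_left.mp this.symm)
  have hl2 : ∀ a b : S, l (δ a) (γ^[s] (ξ^[t] b)) = 0 := by
    intro a b
    have := hDl a b
    rw [← hCl2 a b] at this
    exact (add_eq_right.mp this.symm)
  have hr1 : ∀ a b : S, r (γ^[s] (ξ^[t] a)) (δ b) = 0 := by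
    intro a b
    have := hDr a b
    rw [← hCr1 a b] at this
    exact (add_eq_left.mp this.symm)
  have hr2 : ∀ a b : S, r (δ a) (γ^[s] (ξ^[t] b)) = 0 := by
    intro a b
    have := hDr a b
    rw [← hCr2 a b] at this
    exact (add_eq_right.mp this.symm)
  have hm1 : ∀ a b : S, m (γ^[s] (ξ^[t] a)) (δ b) = 0 := by
    intro a b
    have := hDm a b
    rw [← hCm1 a b] at this
    exact (add_eq_left.mp this.symm)
  have hm2 : ∀ a b : S, m (δ a) (γ^[s] (ξ^[t] b)) = 0 := by
    intro a b
    have := hDm a b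
    rw [← hCm2 a b] at this
    exact (add_eq_right.mp this.symm)
  apply hZ
  intro y
  obtain ⟨y', hy'⟩ := hT y
  simp only at hy'
  refine ⟨?_, ?_, ?_, ?_, ?_, ?_⟩ <;> rw [← hy']
  · exact hl2 x y'
  · exact hl1 y' x
  · exact hr2 x y'
  · exact hr1 y' x
  · exact hm2 x y'
  · exact hm1 y' x
end
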